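/- arXiv:2405.11509 — 2 statements merged into one kernel-verified Lean document; each statement's English description precedes it below -/
import Mathlib

section
/- Let X, Y be metric spaces, w a weight on X, and φ: [0,∞) → [0,∞) a function. Suppose there exists M > 0 such that for all x, y ∈ X there is a rectifiable curve γ joining x and y with ∫_γ w ≤ M·φ(d_X(x,y)). Then every mapping f: X → Y satisfying D*f(z) ≤ C·w(z) for all z ∈ X (with constant C) satisfies d_Y(f(x), f(y)) ≤ M·C·φ(d_X(x,y)) for all x, y ∈ X; that is, ‖f‖_{Λ_φ} ≤ M·‖f‖_{B_w}. -/
open Set Filter Metric ENNReal NNReal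

/-- `D* f x`: upper dilation of `f` at `x` (0 at isolated points). -/
noncomputable def Dstar {X Y : Type*} [MetricSpace X] [MetricSpace Y] (f : X → Y) (x : X) :
    ℝ≥0∞ :=
  Filter.limsup (fun y => edist (f x) (f y) / edist x y) (nhdsWithin x {x}ᶜ)

/-- A curve parametrized on `[0,1]` joining `x` to `y`. -/
def IsCurveFrom {X : Type*} [MetricSpace X] (γ : ℝ → X) (x y : X) : Prop :=
  ContinuousOn γ (Set.Icc 0 1) ∧ γ 0 = x ∧ γ 1 = y

/-- Rectifiability of a curve parametrized on `[0,1]`. -/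
def RectifiableCurve {X : Type*} [MetricSpace X] (γ : ℝ → X) : Prop :=
  eVariationOn γ (Set.Icc 0 1) ≠ ⊤

/-- `I` is the curve integral of `g` along `γ : [0,1] → X` (limit of Riemann sums with respect
to arclength). -/
def IsCurveIntegral {X : Type*} [MetricSpace X] (γ : ℝ → X) (g : X → ℝ) (I : ℝ) : Prop :=
  ∀ ε > 0, ∃ δ > 0, ∀ n : ℕ, ∀ t s : ℕ → ℝ,
    0 < n → t 0 = 0 → t n = 1 →
    (∀ i < n, t i < t (i + 1)) →
    (∀ i < n, t (i + 1) - t i < δ) →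
    (∀ i < n, s i ∈ Set.Icc (t i) (t (i + 1))) →
    |I - ∑ i ∈ Finset.range n,
        g (γ (s i)) * (eVariationOn γ (Set.Icc (t i) (t (i + 1)))).toReal| < ε

/-- The weighted distance `d_w`. -/
noncomputable def wDist {X : Type*} [MetricSpace X] (w : X → ℝ) (x y : X) : ℝ :=
  sInf {I | ∃ γ : ℝ → X, IsCurveFrom γ x y ∧ RectifiableCurve γ ∧ IsCurveIntegral γ w I}

/-- The inner (length) distance `d₁`. -/
noncomputable def innerDist {Y : Type*} [MetricSpace Y] (u v : Y) : ℝ :=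
  sInf {L | ∃ δ : ℝ → Y, IsCurveFrom δ u v ∧ eVariationOn δ (Set.Icc 0 1) = ENNReal.ofReal L}

/-- The class `RO^K_w(X,Y)` of regularly oscillating mappings. -/
def RegOsc {X Y : Type*} [MetricSpace X] [MetricSpace Y] (w : X → ℝ) (K : ℝ) (f : X → Y) :
    Prop :=
  (∀ x, Dstar f x ≠ ⊤) ∧
  (∀ x : X, ∀ r : ℝ, 0 < r → r < w x → Bornology.IsBounded (f '' Metric.ball x r)) ∧
  (∀ x : X, ∀ r : ℝ, 0 < r → r < w x →
    Dstar f x ≤ ENNReal.ofReal ((K / r) * ⨆ y : Metric.ball x r, dist (f x) (f y)))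

open Topology

/-!
Split a curve `γ` from `x` to `y` into short pieces. On a piece `[tᵢ, tᵢ₊₁]` the weight is
almost constant, so `D* f < C w(γ tᵢ) + ε` along it, and a continuous-induction argument shows
that `f ∘ γ` moves by at most that constant times the length of the piece. Summing over the
pieces bounds `d(f x, f y)` by a Riemann sum of `C w` along `γ`, i.e. by `C ∫_γ w` up to `ε`.
-/

section

variable {X Y : Type*} [MetricSpace X] [MetricSpace Y] {f : X → Y} {γ : ℝ → X}

lemma eventually_edist_le_of_Dstar_lt {z : X} {L : ℝ≥0∞} (h : Dstar f z < L) :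
    ∀ᶠ y in 𝓝 z, edist (f z) (f y) ≤ L * edist z y := by
  have hquot : ∀ᶠ y in 𝓝[≠] z, edist (f z) (f y) / edist z y < L :=
    eventually_lt_of_limsup_lt h
  rw [eventually_nhdsWithin_iff] at hquot
  filter_upwards [hquot] with y hy
  rcases eq_or_ne y z with rfl | hyz
  · simp
  · exact ((ENNReal.div_lt_iff (Or.inl (edist_pos.2 hyz.symm).ne')
      (Or.inl (edist_ne_top z y))).1 (hy hyz)).le

lemma edist_le_mul_eVariationOn_of_Dstar_lt {L : ℝ≥0∞} {a b : ℝ} (hab : a ≤ b)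
    (hγ : ContinuousOn γ (Icc a b)) (hL : ∀ t ∈ Icc a b, Dstar f (γ t) < L) :
    edist (f (γ a)) (f (γ b)) ≤ L * eVariationOn γ (Icc a b) := by
  set S : Set ℝ :=
    {t | t ∈ Icc a b ∧ edist (f (γ a)) (f (γ t)) ≤ L * eVariationOn γ (Icc a t)}
  have extend : ∀ s ∈ S, ∀ t ∈ Icc a b, s ≤ t →
      edist (f (γ s)) (f (γ t)) ≤ L * edist (γ s) (γ t) → t ∈ S := by
    intro s hs t ht hst hloc
    refine ⟨ht, ?_⟩
    calc edist (f (γ a)) (f (γ t))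
        ≤ edist (f (γ a)) (f (γ s)) + edist (f (γ s)) (f (γ t)) := edist_triangle _ _ _
      _ ≤ L * eVariationOn γ (Icc a s) + L * eVariationOn γ (Icc s t) := by
        gcongr
        · exact hs.2
        · exact hloc.trans <| by
            gcongr; exact eVariationOn.edist_le γ ⟨le_rfl, hst⟩ ⟨hst, le_rfl⟩
      _ = L * eVariationOn γ (Icc a t) := by
        rw [← mul_add, ← univ_inter (Icc a t), ← eVariationOn.Icc_add_Icc γ hs.1.1 hst
          (mem_univ s), univ_inter, univ_inter]
  have haS : a ∈ S := ⟨⟨le_rfl, hab⟩, by simp⟩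
  have hbdd : BddAbove S := ⟨b, fun t ht => ht.1.2⟩
  set T := sSup S
  have hT : T ∈ Icc a b := ⟨le_csSup hbdd haS, csSup_le ⟨a, haS⟩ fun t ht => ht.1.2⟩
  obtain ⟨η, hη, hlocal⟩ : ∃ η > 0, ∀ t ∈ Icc a b, |t - T| < η →
      edist (f (γ T)) (f (γ t)) ≤ L * edist (γ T) (γ t) := by
    have := (hγ T hT).eventually (eventually_edist_le_of_Dstar_lt (hL T hT))
    obtain ⟨η, hη, hball⟩ := Metric.mem_nhdsWithin_iff.1 this
    exact ⟨η, hη, fun t ht htT => hball ⟨by rwa [mem_ball, Real.dist_eq], ht⟩⟩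
  have hTS : T ∈ S := by
    obtain ⟨t, htS, ht⟩ := exists_lt_of_lt_csSup ⟨a, haS⟩ (sub_lt_self T hη)
    have htT : t ≤ T := le_csSup hbdd htS
    refine extend t htS T hT htT ?_
    rw [edist_comm, edist_comm (γ t)]
    exact hlocal t htS.1 (by rw [abs_lt]; constructor <;> linarith)
  rcases hT.2.eq_or_lt with hTb | hTb
  · exact hTb ▸ hTS.2
  -- otherwise the bound would extend a little beyond `T = sup S`
  set t := min b (T + η / 2)
  have hTt : T < t := lt_min hTb (by linarith)
  have ht : t ∈ Icc a b := ⟨hT.1.trans hTt.le, min_le_left _ _⟩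
  have htS : t ∈ S := extend T hTS t ht hTt.le <| hlocal t ht <| by
    rw [abs_lt]; constructor <;> linarith [min_le_right b (T + η / 2)]
  exact absurd (le_csSup hbdd htS) hTt.not_ge

variable {t : ℕ → ℝ}

lemma edist_le_sum_mul_eVariationOn_of_Dstar_lt (ht : Monotone t) {n : ℕ}
    (hγ : ContinuousOn γ (Icc (t 0) (t n))) {L : ℕ → ℝ≥0∞}
    (hL : ∀ i < n, ∀ τ ∈ Icc (t i) (t (i + 1)), Dstar f (γ τ) < L i) :
    edist (f (γ (t 0))) (f (γ (t n))) ≤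
      ∑ i ∈ Finset.range n, L i * eVariationOn γ (Icc (t i) (t (i + 1))) := by
  induction n with
  | zero => simp
  | succ n ih =>
    have hsub : Icc (t 0) (t n) ⊆ Icc (t 0) (t (n + 1)) := Icc_subset_Icc_right (ht n.le_succ)
    rw [Finset.sum_range_succ]
    calc edist (f (γ (t 0))) (f (γ (t (n + 1))))
        ≤ edist (f (γ (t 0))) (f (γ (t n))) + edist (f (γ (t n))) (f (γ (t (n + 1)))) :=
          edist_triangle _ _ _
      _ ≤ _ := by
        gcongr
        · exact ih (hγ.mono hsub) fun i hi => hL i (by omega)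
        · exact edist_le_mul_eVariationOn_of_Dstar_lt (ht n.le_succ)
            (hγ.mono (Icc_subset_Icc_left (ht (Nat.zero_le n)))) (hL n n.lt_succ_self)

lemma dist_le_sum_mul_eVariationOn_of_Dstar_lt (ht : Monotone t) {n : ℕ}
    (hγ : ContinuousOn γ (Icc (t 0) (t n))) (hfin : eVariationOn γ (Icc (t 0) (t n)) ≠ ⊤)
    {L : ℕ → ℝ}
    (hL : ∀ i < n, ∀ τ ∈ Icc (t i) (t (i + 1)), Dstar f (γ τ) < ENNReal.ofReal (L i)) :
    dist (f (γ (t 0))) (f (γ (t n))) ≤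
      ∑ i ∈ Finset.range n, L i * (eVariationOn γ (Icc (t i) (t (i + 1)))).toReal := by
  have hpiece : ∀ i < n, eVariationOn γ (Icc (t i) (t (i + 1))) ≠ ⊤ := fun i hi =>
    ne_top_of_le_ne_top hfin <| eVariationOn.mono γ <|
      Icc_subset_Icc (ht (Nat.zero_le i)) (ht (by omega))
  have hLnonneg : ∀ i < n, 0 ≤ L i := fun i hi => by
    have := (hL i hi (t i) ⟨le_rfl, ht i.le_succ⟩).trans_le' bot_le
    exact (ENNReal.ofReal_pos.1 (pos_of_gt this)).le
  have hterm :
      ∀ i ∈ Finset.range n, 0 ≤ L i * (eVariationOn γ (Icc (t i) (t (i + 1)))).toReal :=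
    fun i hi => mul_nonneg (hLnonneg i (Finset.mem_range.1 hi)) ENNReal.toReal_nonneg
  rw [dist_edist, ← ENNReal.ofReal_le_ofReal_iff (Finset.sum_nonneg hterm),
    ENNReal.ofReal_toReal (edist_ne_top _ _), ENNReal.ofReal_sum_of_nonneg hterm]
  refine (edist_le_sum_mul_eVariationOn_of_Dstar_lt ht hγ hL).trans_eq
    (Finset.sum_congr rfl fun i hi => ?_)
  rw [ENNReal.ofReal_mul (hLnonneg i (Finset.mem_range.1 hi)),
    ENNReal.ofReal_toReal (hpiece i (Finset.mem_range.1 hi))]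

variable {w : X → ℝ} {C : ℝ}

lemma dist_le_riemannSum_add_of_Dstar_le (hw : ∀ z, 0 ≤ w z) (hγ : ContinuousOn γ (Icc 0 1))
    (hrect : RectifiableCurve γ) (ht : Monotone t) {n : ℕ} (ht0 : t 0 = 0)
    (htn : t n = 1) (hC : 0 ≤ C) (hB : ∀ z, Dstar f z ≤ ENNReal.ofReal (C * w z)) {ε : ℝ}
    (hosc : ∀ i < n, ∀ τ ∈ Icc (t i) (t (i + 1)), C * w (γ τ) < C * w (γ (t i)) + ε) :
    dist (f (γ 0)) (f (γ 1)) ≤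
      C * ∑ i ∈ Finset.range n,
          w (γ (t i)) * (eVariationOn γ (Icc (t i) (t (i + 1)))).toReal +
        ε * (eVariationOn γ (Icc 0 1)).toReal := by
  have hsum := eVariationOn.sum' γ ht (n := n)
  rw [ht0, htn] at hsum
  have hdist := dist_le_sum_mul_eVariationOn_of_Dstar_lt (f := f)
    (L := fun i => C * w (γ (t i)) + ε) ht (ht0 ▸ htn ▸ hγ) (ht0 ▸ htn ▸ hrect)
    fun i hi τ hτ => (hB _).trans_lt <| (ENNReal.ofReal_lt_ofReal_iff <|
      (mul_nonneg hC (hw _)).trans_lt (hosc i hi τ hτ)).2 (hosc i hi τ hτ)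
  rw [ht0, htn] at hdist
  refine hdist.trans_eq ?_
  rw [← hsum, ENNReal.toReal_sum (ENNReal.sum_ne_top.1 (hsum ▸ hrect)), Finset.mul_sum,
    Finset.mul_sum, ← Finset.sum_add_distrib]
  exact Finset.sum_congr rfl fun i _ => by ring

lemma dist_le_mul_of_isCurveIntegral (hwc : Continuous w) (hw : ∀ z, 0 ≤ w z) {x y : X}
    (hγ : IsCurveFrom γ x y) (hrect : RectifiableCurve γ) {I : ℝ} (hI : IsCurveIntegral γ w I)
    (hC : 0 ≤ C) (hB : ∀ z, Dstar f z ≤ ENNReal.ofReal (C * w z)) :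
    dist (f x) (f y) ≤ C * I := by
  obtain ⟨hγc, rfl, rfl⟩ := hγ
  set V := (eVariationOn γ (Icc 0 1)).toReal
  suffices h : ∀ ε > 0, dist (f (γ 0)) (f (γ 1)) ≤ C * I + ε * (C + V) by
    have hlim : Tendsto (fun ε => C * I + ε * (C + V)) (𝓝[>] 0) (𝓝 (C * I)) := by
      have : Continuous fun ε => C * I + ε * (C + V) := by fun_prop
      simpa using (this.tendsto 0).mono_left nhdsWithin_le_nhds
    exact ge_of_tendsto hlim (eventually_nhdsWithin_of_forall h)
  intro ε hε
  obtain ⟨δ₁, hδ₁, hRiemann⟩ := hI ε hε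
  obtain ⟨δ₂, hδ₂, hunif⟩ := Metric.uniformContinuousOn_iff.1
    (isCompact_Icc.uniformContinuousOn_of_continuous
      ((show Continuous fun z => C * w z by fun_prop).comp_continuousOn hγc)) ε hε
  obtain ⟨n, hn⟩ := exists_nat_one_div_lt (lt_min hδ₁ hδ₂)
  set t : ℕ → ℝ := fun i => i / (n + 1)
  have ht : Monotone t := fun i j hij => by simp only [t]; gcongr
  have ht0 : t 0 = 0 := by simp [t]
  have htn : t (n + 1) = 1 := by simp only [t]; push_cast; exact div_self (by positivity)
  have hstep : ∀ i, t (i + 1) - t i = 1 / (n + 1) := fun i => by simp only [t]; push_cast; ring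
  have hRs := hRiemann (n + 1) t t n.succ_pos ht0 htn
    (fun i _ => sub_pos.1 (hstep i ▸ by positivity))
    (fun i _ => hstep i ▸ hn.trans_le (min_le_left _ _)) (fun i _ => ⟨le_rfl, ht i.le_succ⟩)
  have hosc :
      ∀ i < n + 1, ∀ τ ∈ Icc (t i) (t (i + 1)), C * w (γ τ) < C * w (γ (t i)) + ε := by
    intro i hi τ hτ
    have hclose : dist τ (t i) < δ₂ := by
      rw [Real.dist_eq, abs_lt]
      constructor <;> linarith [hτ.1, hτ.2, hstep i, min_le_right δ₁ δ₂]
    have := hunif τ (ht0 ▸ htn ▸ ⟨(ht i.zero_le).trans hτ.1, hτ.2.trans (ht hi)⟩)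
      (t i) (ht0 ▸ htn ▸ ⟨ht i.zero_le, ht hi.le⟩) hclose
    rw [Function.comp_apply, Function.comp_apply, Real.dist_eq, abs_lt] at this
    linarith [this.2]
  calc dist (f (γ 0)) (f (γ 1))
      ≤ C * ∑ i ∈ Finset.range (n + 1),
          w (γ (t i)) * (eVariationOn γ (Icc (t i) (t (i + 1)))).toReal + ε * V :=
        dist_le_riemannSum_add_of_Dstar_le hw hγc hrect ht ht0 htn hC hB hosc
    _ ≤ C * (I + ε) + ε * V := by gcongr; linarith [(abs_lt.1 hRs).1]
    _ = C * I + ε * (C + V) := by ring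

end

theorem bloch_into_lipschitz_general {X Y : Type*} [MetricSpace X] [MetricSpace Y]
    (w : X → ℝ) (hwc : Continuous w) (hwpos : ∀ x, 0 < w x)
    (φ : ℝ → ℝ)
    (M : ℝ)
    (hcurve : ∀ x y : X, ∃ γ : ℝ → X, ∃ I : ℝ, IsCurveFrom γ x y ∧ RectifiableCurve γ ∧
      IsCurveIntegral γ w I ∧ I ≤ M * φ (dist x y))
    (f : X → Y) (C : ℝ) (hC : 0 ≤ C)
    (hB : ∀ z, Dstar f z ≤ ENNReal.ofReal (C * w z)) :
    ∀ x y, dist (f x) (f y) ≤ M * C * φ (dist x y) := by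
  intro x y
  obtain ⟨γ, I, hγ, hrect, hI, hIle⟩ := hcurve x y
  calc dist (f x) (f y)
      ≤ C * I := dist_le_mul_of_isCurveIntegral hwc (fun z => (hwpos z).le) hγ hrect hI hC hB
    _ ≤ C * (M * φ (dist x y)) := by gcongr
    _ = M * C * φ (dist x y) := by ring

theorem bloch_into_lipschitz {X Y : Type*} [MetricSpace X] [MetricSpace Y]
    (w : X → ℝ) (hwc : Continuous w) (hwpos : ∀ x, 0 < w x)
    (φ : ℝ → ℝ) (hφnn : ∀ t ≥ (0:ℝ), 0 ≤ φ t)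
    (M : ℝ) (hM : 0 < M)
    (hcurve : ∀ x y : X, ∃ γ : ℝ → X, ∃ I : ℝ, IsCurveFrom γ x y ∧ RectifiableCurve γ ∧
      IsCurveIntegral γ w I ∧ I ≤ M * φ (dist x y))
    (f : X → Y) (C : ℝ) (hC : 0 ≤ C)
    (hB : ∀ z, Dstar f z ≤ ENNReal.ofReal (C * w z)) :
    ∀ x y, dist (f x) (f y) ≤ M * C * φ (dist x y) :=
  bloch_into_lipschitz_general w hwc hwpos φ M hcurve f C hC hB
end

section
/- Let X, Y be metric spaces, α ∈ (0,1), w a weight on X, and suppose there exists M > 0 such that for every x, y ∈ X there is a rectifiable curve γ joining them with ∫_γ w^{α−1} ≤ M·d_X(x,y)^α. Then a mapping f ∈ RO^K_w(X,Y) satisfies D*f(z) ≤ C_f·w(z)^{α−1} for all z ∈ X if and only if it satisfies d_Y(f(x),f(y)) ≤ C'_f·d_X(x,y)^α for all x, y ∈ X. Moreover one may take C'_f ≤ M·C_f in one direction and C_f ≤ (2K/α)·C'_f in the other. -/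
open Set Filter Metric ENNReal NNReal

/-!
If `D*f ≤ C w^(α-1)`, then near each point of a curve `γ` the map `f` is
`(C w^(α-1) + ε)`-Lipschitz. Cousin's lemma provides a tagged partition of `γ` subordinate to these
neighbourhoods and as fine as the curve integral requires, so `d(f x, f y)` is bounded by a Riemann
sum of `∫_γ C w^(α-1) ≤ C M d(x,y)^α`, up to `ε`.

Conversely, Hölder continuity bounds the oscillation of `f` on `B(z, r)` by `C' r^α`, and the
regular-oscillation inequality at the radius `r = (α/2) w(z)` gives
`D*f(z) ≤ K C' r^(α-1) ≤ (2K/α) C' w(z)^(α-1)`.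
-/

-- `t` is monotone on all of `ℕ`, not only up to `n`, which is the form `eVariationOn.sum'` takes.
structure IsFineTaggedPartition (δ : ℝ → ℝ) (a b : ℝ) (n : ℕ) (t s : ℕ → ℝ) : Prop where
  mono : Monotone t
  zero : t 0 = a
  last : t n = b
  lt_succ : ∀ i < n, t i < t (i + 1)
  tag_mem : ∀ i < n, s i ∈ Icc (t i) (t (i + 1))
  Icc_subset_ball : ∀ i < n, Icc (t i) (t (i + 1)) ⊆ ball (s i) (δ (s i))

namespace IsFineTaggedPartition

variable {δ : ℝ → ℝ} {a b : ℝ} {n : ℕ} {t s : ℕ → ℝ}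

lemma mem_Icc (hP : IsFineTaggedPartition δ a b n t s) {i : ℕ} (hi : i ≤ n) :
    t i ∈ Icc a b :=
  ⟨hP.zero ▸ hP.mono (Nat.zero_le i), hP.last ▸ hP.mono hi⟩

lemma Icc_subset (hP : IsFineTaggedPartition δ a b n t s) {i : ℕ} (hi : i < n) :
    Icc (t i) (t (i + 1)) ⊆ Icc a b :=
  Icc_subset_Icc (hP.mem_Icc hi.le).1 (hP.mem_Icc hi).2

lemma sub_lt (hP : IsFineTaggedPartition δ a b n t s) {η : ℝ} (hδη : ∀ r, δ r ≤ η) {i : ℕ}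
    (hi : i < n) : t (i + 1) - t i < 2 * η := by
  have hle := (hP.lt_succ i hi).le
  have h₁ := hP.Icc_subset_ball i hi (left_mem_Icc.2 hle)
  have h₂ := hP.Icc_subset_ball i hi (right_mem_Icc.2 hle)
  rw [mem_ball, Real.dist_eq] at h₁ h₂
  linarith [abs_lt.1 h₁, abs_lt.1 h₂, hδη (s i)]

lemma self (δ : ℝ → ℝ) (a : ℝ) : IsFineTaggedPartition δ a a 0 (fun _ ↦ a) (fun _ ↦ a) :=
  ⟨monotone_const, rfl, rfl, by simp, by simp, by simp⟩

lemma snoc (hP : IsFineTaggedPartition δ a b n t s) {c r : ℝ} (hbc : b < c) (hr : r ∈ Icc b c)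
    (hsub : Icc b c ⊆ ball r (δ r)) :
    IsFineTaggedPartition δ a c (n + 1) (fun i ↦ if i ≤ n then t i else c)
      (fun i ↦ if i < n then s i else r) := by
  have ht_le : ∀ i ≤ n, t i ≤ c := fun i hi ↦ (hP.mem_Icc hi).2.trans hbc.le
  refine ⟨fun i j hij ↦ ?_, by simp [hP.zero], by simp, fun i hi ↦ ?_, fun i hi ↦ ?_,
    fun i hi ↦ ?_⟩
  · by_cases hj : j ≤ n
    · simp only [hij.trans hj, hj, if_true]
      exact hP.mono hij
    · simp only [hj, if_false]
      split_ifs with hi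
      exacts [ht_le i hi, le_rfl]
  all_goals
    rcases Nat.lt_succ_iff_lt_or_eq.1 hi with hi | rfl
    · simp only [hi.le, Nat.succ_le_of_lt hi, hi, if_true]
      first
        | exact hP.lt_succ i hi
        | exact hP.tag_mem i hi
        | exact hP.Icc_subset_ball i hi
    · simp only [le_rfl, Nat.not_succ_le_self, lt_irrefl, if_true, if_false, hP.last]
      first
        | exact hbc
        | exact hr
        | exact hsub

end IsFineTaggedPartition

open IsFineTaggedPartition in
/-- Cousin's lemma. -/
theorem exists_isFineTaggedPartition {δ : ℝ → ℝ} {a b : ℝ} (hab : a ≤ b)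
    (hδ : ∀ r ∈ Icc a b, 0 < δ r) : ∃ n t s, IsFineTaggedPartition δ a b n t s := by
  set A := {c ∈ Icc a b | ∃ n t s, IsFineTaggedPartition δ a c n t s}
  have haA : a ∈ A := ⟨left_mem_Icc.2 hab, 0, _, _, self δ a⟩
  have hA : BddAbove A := ⟨b, fun c hc ↦ hc.1.2⟩
  set c := sSup A
  have hc : c ∈ Icc a b := ⟨le_csSup hA haA, csSup_le ⟨a, haA⟩ fun c hc ↦ hc.1.2⟩
  have hδc := hδ c hc
  obtain ⟨T, ⟨hT, n, t, s, hP⟩, hcT⟩ : ∃ T ∈ A, c - δ c < T :=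
    exists_lt_of_lt_csSup ⟨a, haA⟩ (by linarith)
  rcases hT.2.eq_or_lt with rfl | hTb
  · exact ⟨n, t, s, hP⟩
  -- appending `[T, T']` tagged at `c` to a partition of `[a, T]` overshoots `sup A` unless `T' = b`
  set T' := min b (c + δ c / 2)
  have hTc : T ≤ c := le_csSup hA ⟨hT, n, t, s, hP⟩
  have hPT' := hP.snoc (c := T') (r := c) (lt_min hTb (by linarith))
    ⟨hTc, le_min hc.2 (by linarith)⟩ fun u hu ↦ by
      rw [mem_ball, Real.dist_eq, abs_lt]
      constructor <;> linarith [hu.1, hu.2, min_le_right b (c + δ c / 2)]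
  have hT'c : T' ≤ c := le_csSup hA ⟨⟨hT.1.trans (hTc.trans (le_min hc.2 (by linarith))),
    min_le_left _ _⟩, _, _, _, hPT'⟩
  have hT'b : T' = b := by
    rcases min_choice b (c + δ c / 2) with h | h
    · exact h
    · have h' : T' = c + δ c / 2 := h
      linarith
  exact ⟨_, _, _, hT'b ▸ hPT'⟩

section

variable {X Y : Type*} [MetricSpace X] [MetricSpace Y]

lemma IsCurveIntegral.const_mul {γ : ℝ → X} {g : X → ℝ} {I : ℝ} (hI : IsCurveIntegral γ g I)
    (C : ℝ) : IsCurveIntegral γ (fun z ↦ C * g z) (C * I) := by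
  intro ε hε
  obtain ⟨δ, hδ, hsum⟩ := hI (ε / (|C| + 1)) (by positivity)
  refine ⟨δ, hδ, fun n t s hn h0 h1 hlt hmesh htag ↦ ?_⟩
  have hC : |C| * (ε / (|C| + 1)) < ε := by
    rw [mul_div_assoc', div_lt_iff₀ (by positivity)]
    nlinarith [abs_nonneg C]
  calc |C * I - ∑ i ∈ Finset.range n,
          C * g (γ (s i)) * (eVariationOn γ (Icc (t i) (t (i + 1)))).toReal|
      = |C| * |I - ∑ i ∈ Finset.range n,
          g (γ (s i)) * (eVariationOn γ (Icc (t i) (t (i + 1)))).toReal| := by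
        simp only [mul_assoc, ← Finset.mul_sum, ← mul_sub, abs_mul]
    _ ≤ |C| * (ε / (|C| + 1)) :=
        mul_le_mul_of_nonneg_left (hsum n t s hn h0 h1 hlt hmesh htag).le (abs_nonneg C)
    _ < ε := hC

lemma exists_dist_le_mul_of_Dstar_lt {f : X → Y} {p : X} {L : ℝ}
    (h : Dstar f p < ENNReal.ofReal L) :
    ∃ ρ > 0, ∀ q, dist p q < ρ → dist (f p) (f q) ≤ L * dist p q := by
  have hL : 0 < L := ENNReal.ofReal_pos.1 (pos_of_gt h)
  obtain ⟨ρ, hρ, hball⟩ := Metric.mem_nhdsWithin_iff.1 (eventually_lt_of_limsup_lt h)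
  refine ⟨ρ, hρ, fun q hq ↦ ?_⟩
  rcases eq_or_ne q p with rfl | hqp
  · simp
  have hq' : edist (f p) (f q) / edist p q < ENNReal.ofReal L := hball ⟨mem_ball'.2 hq, hqp⟩
  rw [ENNReal.div_lt_iff (Or.inl (edist_pos.2 hqp.symm).ne') (Or.inl (edist_ne_top _ _)),
    edist_dist, edist_dist, ← ENNReal.ofReal_mul hL.le,
    ENNReal.ofReal_lt_ofReal_iff_of_nonneg dist_nonneg] at hq'
  exact hq'.le

lemma dist_comp_le_mul_eVariationOn {γ : ℝ → X} {F : X → Y} {u r v L : ℝ} (hL : 0 ≤ L)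
    (hr : r ∈ Icc u v) (hγ : eVariationOn γ (Icc u v) ≠ ⊤)
    (hF : ∀ q ∈ Icc u v, dist (F (γ r)) (F (γ q)) ≤ L * dist (γ r) (γ q)) :
    dist (F (γ u)) (F (γ v)) ≤ L * (eVariationOn γ (Icc u v)).toReal := by
  have hvar : edist (γ u) (γ r) + edist (γ r) (γ v) ≤ eVariationOn γ (Icc u v) := by
    have := eVariationOn.Icc_add_Icc γ (s := univ) hr.1 hr.2 (mem_univ r)
    simp only [univ_inter] at this
    rw [← this]
    gcongr
    exacts [eVariationOn.edist_le γ (left_mem_Icc.2 hr.1) (right_mem_Icc.2 hr.1),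
      eVariationOn.edist_le γ (left_mem_Icc.2 hr.2) (right_mem_Icc.2 hr.2)]
  have hvar' : dist (γ u) (γ r) + dist (γ r) (γ v) ≤ (eVariationOn γ (Icc u v)).toReal := by
    rw [← ENNReal.ofReal_le_iff_le_toReal hγ, ENNReal.ofReal_add dist_nonneg dist_nonneg,
      ← edist_dist, ← edist_dist]
    exact hvar
  calc dist (F (γ u)) (F (γ v)) ≤ dist (F (γ r)) (F (γ u)) + dist (F (γ r)) (F (γ v)) :=
        dist_triangle_left _ _ _
    _ ≤ L * dist (γ r) (γ u) + L * dist (γ r) (γ v) :=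
        add_le_add (hF u (left_mem_Icc.2 (hr.1.trans hr.2)))
          (hF v (right_mem_Icc.2 (hr.1.trans hr.2)))
    _ ≤ L * (eVariationOn γ (Icc u v)).toReal := by
        rw [← mul_add, dist_comm (γ r) (γ u)]
        exact mul_le_mul_of_nonneg_left hvar' hL

theorem dist_le_of_Dstar_le_of_isCurveIntegral {f : X → Y} {g : X → ℝ} (hg : ∀ z, 0 ≤ g z)
    (hD : ∀ z, Dstar f z ≤ ENNReal.ofReal (g z)) {γ : ℝ → X} {x y : X}
    (hγ : IsCurveFrom γ x y) (hrect : RectifiableCurve γ) {I : ℝ}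
    (hI : IsCurveIntegral γ g I) : dist (f x) (f y) ≤ I := by
  obtain ⟨hγc, rfl, rfl⟩ := hγ
  set L := (eVariationOn γ (Icc 0 1)).toReal
  have hL : 0 ≤ L := ENNReal.toReal_nonneg
  suffices h : ∀ ε > 0, dist (f (γ 0)) (f (γ 1)) ≤ I + ε * (1 + L) by
    refine le_of_forall_pos_le_add fun ε hε ↦ ?_
    simpa [div_mul_cancel₀ ε (by positivity : 1 + L ≠ 0)] using h (ε / (1 + L)) (by positivity)
  intro ε hε
  have hgauge : ∀ r ∈ Icc (0 : ℝ) 1, ∃ ρ > 0, ∀ q ∈ Icc (0 : ℝ) 1, dist q r < ρ →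
      dist (f (γ r)) (f (γ q)) ≤ (g (γ r) + ε) * dist (γ r) (γ q) := by
    intro r hr
    obtain ⟨ρ, hρ, hlip⟩ := exists_dist_le_mul_of_Dstar_lt (f := f) (p := γ r) (L := g (γ r) + ε)
      ((hD _).trans_lt ((ENNReal.ofReal_lt_ofReal_iff (by linarith [hg (γ r)])).2 (by linarith)))
    obtain ⟨ρ', hρ', hcont⟩ := Metric.continuousWithinAt_iff.1 (hγc r hr) ρ hρ
    exact ⟨ρ', hρ', fun q hq hqr ↦ hlip _ (by rw [dist_comm]; exact hcont hq hqr)⟩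
  choose! ρ hρ hlip using hgauge
  obtain ⟨δ, hδ, hRiemann⟩ := hI ε hε
  obtain ⟨n, t, s, hP⟩ := exists_isFineTaggedPartition (δ := fun r ↦ min (δ / 2) (ρ r))
    zero_le_one fun r hr ↦ lt_min (half_pos hδ) (hρ r hr)
  have hn : 0 < n := Nat.pos_of_ne_zero fun h ↦ by simpa [h, hP.zero] using hP.last
  have htag : ∀ i < n, s i ∈ Icc (0 : ℝ) 1 := fun i hi ↦ hP.Icc_subset hi (hP.tag_mem i hi)
  have hfin : ∀ i < n, eVariationOn γ (Icc (t i) (t (i + 1))) ≠ ⊤ := fun i hi ↦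
    ne_top_of_le_ne_top hrect (eVariationOn.mono γ (hP.Icc_subset hi))
  set v := fun i ↦ (eVariationOn γ (Icc (t i) (t (i + 1)))).toReal
  have hsum : |I - ∑ i ∈ Finset.range n, g (γ (s i)) * v i| < ε :=
    hRiemann n t s hn hP.zero hP.last hP.lt_succ
      (fun i hi ↦ by linarith [hP.sub_lt (fun r ↦ min_le_left (δ / 2) (ρ r)) hi]) hP.tag_mem
  have hv : ∑ i ∈ Finset.range n, v i = L := by
    rw [← ENNReal.toReal_sum fun i hi ↦ hfin i (Finset.mem_range.1 hi),
      eVariationOn.sum' γ hP.mono, hP.zero, hP.last]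
  have hstep : ∀ i < n, dist (f (γ (t i))) (f (γ (t (i + 1)))) ≤ (g (γ (s i)) + ε) * v i :=
    fun i hi ↦ dist_comp_le_mul_eVariationOn (by linarith [hg (γ (s i))]) (hP.tag_mem i hi)
      (hfin i hi) fun q hq ↦ hlip _ (htag i hi) q (hP.Icc_subset hi hq)
        ((hP.Icc_subset_ball i hi hq).trans_le (min_le_right _ _))
  calc dist (f (γ 0)) (f (γ 1)) = dist (f (γ (t 0))) (f (γ (t n))) := by rw [hP.zero, hP.last]
    _ ≤ ∑ i ∈ Finset.range n, dist (f (γ (t i))) (f (γ (t (i + 1)))) :=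
        dist_le_range_sum_dist (fun i ↦ f (γ (t i))) n
    _ ≤ ∑ i ∈ Finset.range n, (g (γ (s i)) + ε) * v i :=
        Finset.sum_le_sum fun i hi ↦ hstep i (Finset.mem_range.1 hi)
    _ = ∑ i ∈ Finset.range n, g (γ (s i)) * v i + ε * L := by
        rw [← hv, Finset.mul_sum, ← Finset.sum_add_distrib]
        exact Finset.sum_congr rfl fun i _ ↦ by ring
    _ ≤ I + ε * (1 + L) := by linarith [(abs_lt.1 hsum).1]

lemma iSup_dist_ball_le_of_holder {f : X → Y} {C α r : ℝ} (hC : 0 ≤ C) (hα : 0 ≤ α)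
    (hH : ∀ x y, dist (f x) (f y) ≤ C * dist x y ^ α) (z : X) (hr : 0 ≤ r) :
    ⨆ y : ball z r, dist (f z) (f y) ≤ C * r ^ α :=
  Real.iSup_le (fun y ↦ (hH z y).trans (mul_le_mul_of_nonneg_left
    (Real.rpow_le_rpow dist_nonneg (mem_ball'.1 y.2).le hα) hC)) (by positivity)

lemma RegOsc.Dstar_le_of_holder {w : X → ℝ} {K : ℝ} {f : X → Y} (hf : RegOsc w K f)
    (hK : 0 ≤ K) {C α : ℝ} (hC : 0 ≤ C) (hα : 0 ≤ α)
    (hH : ∀ x y, dist (f x) (f y) ≤ C * dist x y ^ α) {z : X} {r : ℝ} (hr : 0 < r)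
    (hrw : r < w z) : Dstar f z ≤ ENNReal.ofReal (K * C * r ^ (α - 1)) := by
  refine (hf.2.2 z r hr hrw).trans (ENNReal.ofReal_le_ofReal ?_)
  calc K / r * ⨆ y : ball z r, dist (f z) (f y) ≤ K / r * (C * r ^ α) :=
        mul_le_mul_of_nonneg_left (iSup_dist_ball_le_of_holder hC hα hH z hr.le) (by positivity)
    _ = K * C * r ^ (α - 1) := by
        rw [Real.rpow_sub_one hr.ne']
        ring

end

lemma rpow_sub_one_le_inv {x α : ℝ} (hx₀ : 0 < x) (hx₁ : x ≤ 1) (hα : 0 ≤ α) :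
    x ^ (α - 1) ≤ x⁻¹ := by
  rw [← Real.rpow_neg_one]
  exact Real.rpow_le_rpow_of_exponent_ge hx₀ hx₁ (by linarith)

theorem hardy_littlewood_metric_general {X Y : Type*} [MetricSpace X] [MetricSpace Y]
    (α : ℝ) (hα : α ∈ Set.Ioo (0:ℝ) 1)
    (w : X → ℝ) (hwpos : ∀ x, 0 < w x)
    (M K : ℝ) (hK : 0 < K)
    (hcurve : ∀ x y : X, ∃ γ : ℝ → X, ∃ I : ℝ, IsCurveFrom γ x y ∧ RectifiableCurve γ ∧
      IsCurveIntegral γ (fun z => w z ^ (α - 1)) I ∧ I ≤ M * dist x y ^ α)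
    (f : X → Y) (hf : RegOsc w K f) :
    (∀ C : ℝ, 0 ≤ C → (∀ z, Dstar f z ≤ ENNReal.ofReal (C * w z ^ (α - 1))) →
      ∀ x y, dist (f x) (f y) ≤ M * C * dist x y ^ α) ∧
    (∀ C' : ℝ, 0 ≤ C' → (∀ x y, dist (f x) (f y) ≤ C' * dist x y ^ α) →
      ∀ z, Dstar f z ≤ ENNReal.ofReal ((2 * K / α) * C' * w z ^ (α - 1))) := by
  obtain ⟨hα₀, hα₁⟩ := hα
  refine ⟨fun C hC hD x y ↦ ?_, fun C' hC' hH z ↦ ?_⟩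
  · obtain ⟨γ, I, hγ, hrect, hI, hIM⟩ := hcurve x y
    calc dist (f x) (f y) ≤ C * I :=
          dist_le_of_Dstar_le_of_isCurveIntegral
            (fun z ↦ mul_nonneg hC (Real.rpow_nonneg (hwpos z).le _)) hD hγ hrect (hI.const_mul C)
      _ ≤ M * C * dist x y ^ α := by linarith [mul_le_mul_of_nonneg_left hIM hC]
  · -- the radius `r = (α / 2) w(z)` in the definition of `RO^K_w`
    have hθ : 0 < α / 2 := by positivity
    have hwz := hwpos z
    refine (hf.Dstar_le_of_holder hK.le hC' hα₀.le hH (mul_pos hθ hwz) (by nlinarith)).trans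
      (ENNReal.ofReal_le_ofReal ?_)
    rw [Real.mul_rpow hθ.le hwz.le]
    have hθα := rpow_sub_one_le_inv hθ (by linarith) hα₀.le
    have hw := Real.rpow_nonneg hwz.le (α - 1)
    calc K * C' * ((α / 2) ^ (α - 1) * w z ^ (α - 1))
        ≤ K * C' * ((α / 2)⁻¹ * w z ^ (α - 1)) := by gcongr
      _ = 2 * K / α * C' * w z ^ (α - 1) := by field_simp

theorem hardy_littlewood_metric {X Y : Type*} [MetricSpace X] [MetricSpace Y]
    (α : ℝ) (hα : α ∈ Set.Ioo (0:ℝ) 1)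
    (w : X → ℝ) (hwc : Continuous w) (hwpos : ∀ x, 0 < w x)
    (M K : ℝ) (hM : 0 < M) (hK : 0 < K)
    (hcurve : ∀ x y : X, ∃ γ : ℝ → X, ∃ I : ℝ, IsCurveFrom γ x y ∧ RectifiableCurve γ ∧
      IsCurveIntegral γ (fun z => w z ^ (α - 1)) I ∧ I ≤ M * dist x y ^ α)
    (f : X → Y) (hf : RegOsc w K f) :
    (∀ C : ℝ, 0 ≤ C → (∀ z, Dstar f z ≤ ENNReal.ofReal (C * w z ^ (α - 1))) →
      ∀ x y, dist (f x) (f y) ≤ M * C * dist x y ^ α) ∧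
    (∀ C' : ℝ, 0 ≤ C' → (∀ x y, dist (f x) (f y) ≤ C' * dist x y ^ α) →
      ∀ z, Dstar f z ≤ ENNReal.ofReal ((2 * K / α) * C' * w z ^ (α - 1))) :=
  hardy_littlewood_metric_general α hα w hwpos M K hK hcurve f hf
end
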